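/- A function F and its m-harmonic symmetrization F_sym generate the same Cartan area integrand: A^F(x,Z) = A^{F_sym}(x,Z) for all x ∈ ℝ^{m+1} and Z ≠ 0. -/

import Mathlib

open MeasureTheory
open scoped RealInnerProductSpace

/-- The `m`-harmonic symmetrization of `F`. -/
noncomputable def Fsym (m : ℕ)
    (F : EuclideanSpace ℝ (Fin (m + 1)) → EuclideanSpace ℝ (Fin (m + 1)) → ℝ)
    (x y : EuclideanSpace ℝ (Fin (m + 1))) : ℝ :=
  (2 / ((F x y) ^ (-(m : ℝ)) + (F x (-y)) ^ (-(m : ℝ)))) ^ ((m : ℝ)⁻¹)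

/-- The Cartan area integrand generated by `F`. -/
noncomputable def cartan (m : ℕ)
    (F : EuclideanSpace ℝ (Fin (m + 1)) → EuclideanSpace ℝ (Fin (m + 1)) → ℝ)
    (x Z : EuclideanSpace ℝ (Fin (m + 1))) : ℝ :=
  ‖Z‖ * (μH[(m : ℝ)] {v : EuclideanSpace ℝ (Fin m) | ‖v‖ ≤ 1}).toReal /
    (μH[(m : ℝ)] {T : EuclideanSpace ℝ (Fin (m + 1)) | ⟪Z, T⟫ = 0 ∧ F x T ≤ 1}).toReal

/-!
In polar coordinates, a positive, positively `1`-homogeneous function `G` on an `n`-dimensional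
space satisfies `n · vol {G ≤ 1} = ∫_{S^{n-1}} G(u)^{-n} dσ(u)`, so `vol {G ≤ 1}` depends linearly
on `G^{-n}`. The `m`-harmonic symmetrization replaces `G^{-m}` by the average of `G^{-m}` and
`(G ∘ neg)^{-m}`, and `{G ∘ neg ≤ 1} = -{G ≤ 1}` has the same volume. On the hyperplane `Z^⊥`,
identified isometrically with `ℝ^m` where `μH[m]` is a Haar measure, this makes the denominators
of the two Cartan integrands equal.
-/

open Measure Set Metric Module

lemma MeasureTheory.Measure.volumeIoiPow_singleton (n : ℕ) (x : Ioi (0 : ℝ)) :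
    volumeIoiPow n {x} = 0 := by
  refine withDensity_absolutelyContinuous _ _ ?_
  rw [comap_subtype_coe_apply measurableSet_Ioi, image_singleton, Real.volume_singleton]

lemma MeasureTheory.Measure.volumeIoiPow_apply_Iic (n : ℕ) (x : Ioi (0 : ℝ)) :
    volumeIoiPow n (Iic x) = ENNReal.ofReal (x.1 ^ (n + 1) / (n + 1)) := by
  rw [← volumeIoiPow_apply_Iio, measure_congr (Iio_ae_eq_Iic' (volumeIoiPow_singleton n x))]

section PositivelyHomogeneous

variable {E : Type*} [NormedAddCommGroup E] [NormedSpace ℝ E] [FiniteDimensional ℝ E]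
  [MeasurableSpace E] [BorelSpace E] [Nontrivial E] (μ : Measure E) [μ.IsAddHaarMeasure]

/-- In polar coordinates the ray through `u` meets `{G ≤ 1}` in `(0, (G u)⁻¹]`, whose
`volumeIoiPow (dim E - 1)`-measure is `(G u) ^ (-dim E) / dim E`. -/
theorem finrank_mul_addHaar_sublevel_eq_lintegral_toSphere {G : E → ℝ} (hGm : Measurable G)
    (hGpos : ∀ v, v ≠ 0 → 0 < G v) (hGhom : ∀ t : ℝ, 0 < t → ∀ v, G (t • v) = t * G v) :
    finrank ℝ E * μ {v | G v ≤ 1} =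
      ∫⁻ u, ENNReal.ofReal (G u ^ (-(finrank ℝ E : ℝ))) ∂μ.toSphere := by
  set n := finrank ℝ E
  have hn : 0 < n := finrank_pos
  set S := {p : sphere (0 : E) 1 × Ioi (0 : ℝ) | p.2.1 * G p.1 ≤ 1}
  have hS : MeasurableSet S :=
    measurableSet_le ((measurable_subtype_coe.comp measurable_snd).mul
      (hGm.comp (measurable_subtype_coe.comp measurable_fst))) measurable_const
  have hGu : ∀ u : sphere (0 : E) 1, 0 < G u :=
    fun u => hGpos u (ne_of_mem_sphere u.2 one_ne_zero)
  have hfiber (u : sphere (0 : E) 1) : Prod.mk u ⁻¹' S = Iic ⟨(G u)⁻¹, inv_pos.2 (hGu u)⟩ := by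
    ext r
    simp only [S, mem_preimage, mem_ofPred_eq, mem_Iic, ← Subtype.coe_le_coe]
    rw [← one_div, le_div_iff₀ (hGu u)]
  have hpolar := (measurePreserving_homeomorphUnitSphereProd μ).symm
    (homeomorphUnitSphereProd E).toMeasurableEquiv
  calc (n : ENNReal) * μ {v | G v ≤ 1}
      = n * μ.comap (↑) ((↑) ⁻¹' {v | G v ≤ 1} : Set ({0}ᶜ : Set E)) := by
        rw [comap_subtype_coe_apply (measurableSet_singleton 0).compl, Subtype.image_preimage_coe,
          ← sdiff_eq_compl_inter, measure_sdiff_null (measure_singleton 0)]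
    _ = n * (μ.toSphere.prod (volumeIoiPow (n - 1))) S := by
        rw [← hpolar.measure_preimage_equiv]
        congr 2
        ext p
        simp [S, hGhom _ p.2.2]
    _ = _ := by
        rw [Measure.prod_apply hS, ← lintegral_const_mul' _ _ (ENNReal.natCast_ne_top n)]
        refine lintegral_congr fun u => ?_
        rw [hfiber, volumeIoiPow_apply_Iic, Nat.sub_add_cancel hn, Nat.cast_pred hn,
          sub_add_cancel, ← ENNReal.ofReal_natCast, ← ENNReal.ofReal_mul (Nat.cast_nonneg n),
          mul_div_cancel₀ _ (Nat.cast_pos.2 hn).ne', Real.rpow_neg (hGu u).le,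
          Real.rpow_natCast, inv_pow]

theorem addHaar_sublevel_eq_of_rpow_neg_eq_average {G G' : E → ℝ}
    (hGm : Measurable G) (hGpos : ∀ v, v ≠ 0 → 0 < G v)
    (hGhom : ∀ t : ℝ, 0 < t → ∀ v, G (t • v) = t * G v)
    (hG'm : Measurable G') (hG'pos : ∀ v, v ≠ 0 → 0 < G' v)
    (hG'hom : ∀ t : ℝ, 0 < t → ∀ v, G' (t • v) = t * G' v)
    (hG' : ∀ v, v ≠ 0 → G' v ^ (-(finrank ℝ E : ℝ)) =
      (G v ^ (-(finrank ℝ E : ℝ)) + G (-v) ^ (-(finrank ℝ E : ℝ))) / 2) :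
    μ {v | G' v ≤ 1} = μ {v | G v ≤ 1} := by
  set n := finrank ℝ E
  have hn : (n : ENNReal) ≠ 0 := Nat.cast_ne_zero.2 finrank_pos.ne'
  have hreflect : μ {v | G (-v) ≤ 1} = μ {v | G v ≤ 1} := measure_neg μ {v | G v ≤ 1}
  have hpolar {H : E → ℝ} := finrank_mul_addHaar_sublevel_eq_lintegral_toSphere μ (G := H)
  have hpolar_neg := finrank_mul_addHaar_sublevel_eq_lintegral_toSphere μ (G := fun v => G (-v))
    (hGm.comp measurable_neg)
    (fun v hv => hGpos (-v) (neg_ne_zero.2 hv))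
    (fun t ht v => by simp only [← smul_neg, hGhom t ht])
  refine (ENNReal.mul_right_inj (two_ne_zero (α := ENNReal)) ENNReal.ofNat_ne_top).1 <|
    (ENNReal.mul_right_inj hn (ENNReal.natCast_ne_top n)).1 ?_
  calc (n : ENNReal) * (2 * μ {v | G' v ≤ 1})
      = ∫⁻ u, 2 * ENNReal.ofReal (G' u ^ (-(n : ℝ))) ∂μ.toSphere := by
        rw [mul_left_comm, hpolar hG'm hG'pos hG'hom, lintegral_const_mul' _ _ ENNReal.ofNat_ne_top]
    _ = ∫⁻ u, ENNReal.ofReal (G u ^ (-(n : ℝ))) + ENNReal.ofReal (G (-u) ^ (-(n : ℝ)))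
          ∂μ.toSphere := by
        refine lintegral_congr fun u => ?_
        have hu : (u : E) ≠ 0 := ne_of_mem_sphere u.2 one_ne_zero
        rw [hG' u hu, ← ENNReal.ofReal_ofNat, ← ENNReal.ofReal_mul zero_le_two,
          mul_div_cancel₀ _ two_ne_zero,
          ENNReal.ofReal_add (Real.rpow_nonneg (hGpos u hu).le _)
            (Real.rpow_nonneg (hGpos _ (neg_ne_zero.2 hu)).le _)]
    _ = (n : ENNReal) * (2 * μ {v | G v ≤ 1}) := by
        rw [lintegral_add_left (by fun_prop),
          ← hpolar hGm hGpos hGhom, ← hpolar_neg, hreflect, two_mul, mul_add]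

end PositivelyHomogeneous

section Fsym

variable {m : ℕ} {F : EuclideanSpace ℝ (Fin (m + 1)) → EuclideanSpace ℝ (Fin (m + 1)) → ℝ}
  {x y : EuclideanSpace ℝ (Fin (m + 1))}

lemma Fsym_rpow_neg (hm : m ≠ 0) (hpos : ∀ y, y ≠ 0 → 0 < F x y) (hy : y ≠ 0) :
    Fsym m F x y ^ (-(m : ℝ)) = (F x y ^ (-(m : ℝ)) + F x (-y) ^ (-(m : ℝ))) / 2 := by
  have hsum : 0 < F x y ^ (-(m : ℝ)) + F x (-y) ^ (-(m : ℝ)) := by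
    have := hpos (-y) (neg_ne_zero.2 hy)
    have := hpos y hy
    positivity
  rw [Fsym, ← Real.rpow_mul (by positivity), inv_mul_eq_div, neg_div,
    div_self (Nat.cast_ne_zero.2 hm), Real.rpow_neg_one, inv_div]

lemma Fsym_pos (hpos : ∀ y, y ≠ 0 → 0 < F x y) (hy : y ≠ 0) : 0 < Fsym m F x y := by
  have := hpos (-y) (neg_ne_zero.2 hy)
  have := hpos y hy
  unfold Fsym
  positivity

lemma measurable_Fsym (hF : Measurable (F x)) : Measurable (Fsym m F x) := by
  unfold Fsym
  fun_prop

lemma Fsym_smul (hm : m ≠ 0) (hpos : ∀ y, y ≠ 0 → 0 < F x y)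
    (hhom : ∀ t : ℝ, 0 < t → ∀ y, F x (t • y) = t * F x y) {t : ℝ} (ht : 0 < t) :
    Fsym m F x (t • y) = t * Fsym m F x y := by
  have hm' : (m : ℝ) ≠ 0 := Nat.cast_ne_zero.2 hm
  rcases eq_or_ne y 0 with rfl | hy
  · have hF0 : F x 0 = 0 := by
      have h2 := hhom 2 two_pos 0
      rw [smul_zero] at h2
      linarith
    simp [Fsym, hF0, Real.zero_rpow (neg_ne_zero.2 hm'), Real.zero_rpow (inv_ne_zero hm')]
  have hty : t • y ≠ 0 := smul_ne_zero ht.ne' hy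
  refine (Real.rpow_left_inj (Fsym_pos hpos hty).le
    (mul_pos ht (Fsym_pos hpos hy)).le (neg_ne_zero.2 hm')).1 ?_
  rw [Fsym_rpow_neg hm hpos hty, Real.mul_rpow ht.le (Fsym_pos hpos hy).le,
    Fsym_rpow_neg hm hpos hy, ← smul_neg, hhom t ht, hhom t ht,
    Real.mul_rpow ht.le (hpos y hy).le, Real.mul_rpow ht.le (hpos _ (neg_ne_zero.2 hy)).le]
  ring

end Fsym

lemma exists_linearIsometry_range_eq_orthogonal {E : Type*} [NormedAddCommGroup E]
    [InnerProductSpace ℝ E] {n : ℕ} [Fact (finrank ℝ E = n + 1)] {Z : E} (hZ : Z ≠ 0) :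
    ∃ φ : EuclideanSpace ℝ (Fin n) →ₗᵢ[ℝ] E, range φ = {T | ⟪Z, T⟫ = 0} := by
  refine ⟨(ℝ ∙ Z)ᗮ.subtypeₗᵢ.comp
    (OrthonormalBasis.fromOrthogonalSpanSingleton n hZ).repr.symm.toLinearIsometry, ?_⟩
  ext T
  simp [Submodule.mem_orthogonal_singleton_iff_inner_right]

/-- `F` and its `m`-harmonic symmetrization generate the same Cartan area integrand. -/
theorem stmt_15 (m : ℕ) (hm : 1 ≤ m)
    (F : EuclideanSpace ℝ (Fin (m + 1)) → EuclideanSpace ℝ (Fin (m + 1)) → ℝ)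
    (hcont : Continuous fun p : EuclideanSpace ℝ (Fin (m + 1)) × EuclideanSpace ℝ (Fin (m + 1)) =>
      F p.1 p.2)
    (hpos : ∀ x y, y ≠ 0 → 0 < F x y)
    (hhom : ∀ x, ∀ t : ℝ, 0 < t → ∀ y, F x (t • y) = t * F x y) :
    ∀ x Z : EuclideanSpace ℝ (Fin (m + 1)), Z ≠ 0 →
      cartan m F x Z = cartan m (Fsym m F) x Z := by
  intro x Z hZ
  have hm0 : m ≠ 0 := Nat.one_le_iff_ne_zero.1 hm
  have : NeZero m := ⟨hm0⟩
  have : Fact (finrank ℝ (EuclideanSpace ℝ (Fin (m + 1))) = m + 1) := ⟨finrank_euclideanSpace_fin⟩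
  obtain ⟨φ, hφ⟩ := exists_linearIsometry_range_eq_orthogonal (n := m) hZ
  have hslice (H : EuclideanSpace ℝ (Fin (m + 1)) → ℝ) :
      μH[(m : ℝ)] {T | ⟪Z, T⟫ = 0 ∧ H T ≤ 1} = μH[(m : ℝ)] {v | H (φ v) ≤ 1} := by
    rw [ofPred_and, inter_comm, ← hφ,
      ← φ.isometry.hausdorffMeasure_preimage (Or.inl (Nat.cast_nonneg m))]
    rfl
  have hφ0 {v} (hv : v ≠ 0) : φ v ≠ 0 := (map_ne_zero_iff φ φ.injective).2 hv
  have hFm : Measurable (F x) := (hcont.comp (Continuous.prodMk_right x)).measurable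
  have hsym : μH[(m : ℝ)] {v | Fsym m F x (φ v) ≤ 1} = μH[(m : ℝ)] {v | F x (φ v) ≤ 1} :=
    addHaar_sublevel_eq_of_rpow_neg_eq_average μH[(m : ℝ)]
      (hFm.comp φ.continuous.measurable) (fun v hv => hpos x _ (hφ0 hv))
      (fun t ht v => by simp only [map_smul, hhom x t ht])
      ((measurable_Fsym hFm).comp φ.continuous.measurable)
      (fun v hv => Fsym_pos (hpos x) (hφ0 hv))
      (fun t ht v => by simp only [map_smul, Fsym_smul hm0 (hpos x) (hhom x) ht])
      (fun v hv => by
        simpa only [finrank_euclideanSpace_fin, map_neg] using Fsym_rpow_neg hm0 (hpos x) (hφ0 hv))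
  rw [cartan, cartan, hslice, hslice, hsym]
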